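/- arXiv:2112.06260 — 4 statements merged into one kernel-verified Lean document; each statement's English description precedes it below -/
import Mathlib

section
/- Fix real numbers r, c, d with r ≠ 0 and Δ := c² − 2rd ≥ 0. For i = 1, 2 let C_i = {(α,β) ∈ ℝ² : α > 0, α² + β² − 2s_iβ + t_i = 0} where the real numbers s_i, t_i satisfy d − c·s_i + (r/2)·t_i = 0. If C₁ ∩ C₂ ≠ ∅, then s₁ = s₂ and t₁ = t₂, i.e., C₁ = C₂. (Nested wall theorem: two distinct semicircular numerical walls for a fixed class with Δ ≥ 0 never intersect in the upper half-plane.) -/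
theorem stmt_3 (r c d : ℝ) (hr : r ≠ 0) (hΔ : c ^ 2 - 2 * r * d ≥ 0)
    (s₁ t₁ s₂ t₂ : ℝ)
    (h₁ : d - c * s₁ + r / 2 * t₁ = 0) (h₂ : d - c * s₂ + r / 2 * t₂ = 0)
    (hne : ({p : ℝ × ℝ | 0 < p.1 ∧ p.1 ^ 2 + p.2 ^ 2 - 2 * s₁ * p.2 + t₁ = 0} ∩
            {p : ℝ × ℝ | 0 < p.1 ∧ p.1 ^ 2 + p.2 ^ 2 - 2 * s₂ * p.2 + t₂ = 0}).Nonempty) :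
    s₁ = s₂ ∧ t₁ = t₂ := by
  obtain ⟨⟨α, β⟩, ⟨hα, e1⟩, hα2, e2⟩ := hne
  simp only [Set.mem_setOf_eq] at e1 e2
  have hr2 : (0:ℝ) < r ^ 2 := by positivity
  have hs : s₁ = s₂ := by
    by_contra hs
    have hne' : s₁ - s₂ ≠ 0 := sub_ne_zero.mpr hs
    have hβ : c - r * β = 0 := by
      have hfac : (c - r * β) * (s₁ - s₂) = 0 := by linear_combination (h₂ - h₁) + (r/2)*(e1 - e2)
      rcases mul_eq_zero.mp hfac with h | h
      · exact h
      · exact absurd h hne'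
    have hkey : r ^ 2 * α ^ 2 = 2 * r * d - c ^ 2 := by
      linear_combination r^2*e1 + (c + r*β - 2*r*s₁)*hβ - 2*r*h₁
    nlinarith [mul_pos hr2 (mul_pos hα hα)]
  refine ⟨hs, ?_⟩
  have : r / 2 * t₁ = r / 2 * t₂ := by
    subst hs; linarith
  have hr' : r / 2 ≠ 0 := by
    intro h; apply hr; linarith
  exact mul_left_cancel₀ hr' this
end

section
/- Let r > 0 and c, d, e be real numbers with c² = 2rd (so Δ = 0). Then the inequality 4(d − βc + β²r/2)² − 6(c − βr)(e − βd + β²c/2 − β³r/6) ≥ 0 holds for all sufficiently negative β if and only if e ≤ c³/(6r²). -/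
theorem stmt_5 (r c d e : ℝ) (hr : 0 < r) (hΔ : c ^ 2 = 2 * r * d) :
    (∃ B : ℝ, ∀ β : ℝ, β ≤ B →
        4 * (d - β * c + β ^ 2 * r / 2) ^ 2
          - 6 * (c - β * r) * (e - β * d + β ^ 2 * c / 2 - β ^ 3 * r / 6) ≥ 0)
    ↔ e ≤ c ^ 3 / (6 * r ^ 2) := by
  have hr' : r ≠ 0 := ne_of_gt hr
  have hd : d = c ^ 2 / (2 * r) := by field_simp; linarith
  have key : ∀ β : ℝ,
      4 * (d - β * c + β ^ 2 * r / 2) ^ 2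
        - 6 * (c - β * r) * (e - β * d + β ^ 2 * c / 2 - β ^ 3 * r / 6)
      = 2 * (c * d - 3 * r * e) * (c / r - β) := by
    intro β
    subst hd
    field_simp
    ring
  have hK : c * d - 3 * r * e = 3 * r * (c ^ 3 / (6 * r ^ 2) - e) := by
    subst hd
    field_simp
    ring
  constructor
  · rintro ⟨B, hB⟩
    set β := min B (c / r - 1) with hβ
    have h1 : β ≤ B := min_le_left _ _
    have h2 : c / r - β ≥ 1 := by
      have := min_le_right B (c / r - 1)
      simp only [hβ]; linarith
    have := hB β h1
    rw [key β] at this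
    have hKnn : c * d - 3 * r * e ≥ 0 := by
      nlinarith
    rw [hK] at hKnn
    nlinarith
  · intro he
    refine ⟨c / r, fun β hβ => ?_⟩
    rw [key β]
    have hKnn : c * d - 3 * r * e ≥ 0 := by rw [hK]; nlinarith
    nlinarith
end

section
/- Let c be a positive integer, f an integer with 0 ≤ f < c, and d a rational number with 2d ∈ ℤ such that d + c²/2 is an integer and d + c²/2 ≡ −f (mod c). Define ε(c,f) = (f/2)(c − f − 1 + f/c) and E = c³/24 + d²/(2c) − ε(c,f). Then E + 2d + 11c/6 is an integer. -/
/-! Writing `m = d + c²/2 = -f - c t`, the quantity expands to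
`(c³ - c)/6 + 2c + c t (c + t)/2 + f (f + 1)/2 + f t + 2m - c²`:
the term `f²/(2c)` of `d²/(2c)` is exactly cancelled by the one in `ε(c, f)`, and the remaining
fractions have integral numerators divisible by their denominators. -/

lemma Int.six_dvd_cube_sub_self (c : ℤ) : 6 ∣ c ^ 3 - c := by
  refine (ZMod.intCast_zmod_eq_zero_iff_dvd _ 6).mp ?_
  push_cast
  generalize (c : ZMod 6) = x
  revert x
  decide

lemma Int.even_mul_mul_add (a b : ℤ) : Even (a * b * (a + b)) := by
  simp only [Int.even_mul, Int.even_add]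
  tauto

lemma max_ch3_add_euler_eq {c f t d : ℚ} (hc : c ≠ 0) (hd : d = -f - c * t - c ^ 2 / 2) :
    (c ^ 3 / 24 + d ^ 2 / (2 * c) - f / 2 * (c - f - 1 + f / c)) + 2 * d + 11 * c / 6
      = (c ^ 3 - c) / 6 + 2 * c + c * t * (c + t) / 2 + f * (f + 1) / 2 + f * t
        + 2 * (-f - c * t) - c ^ 2 := by
  subst hd
  field_simp
  ring

theorem stmt_6_general (c f : ℤ) (hc : 0 < c)
    (d : ℚ)
    (m : ℤ) (hm : d + (c : ℚ) ^ 2 / 2 = (m : ℚ)) (hmod : m ≡ -f [ZMOD c]) :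
    ∃ n : ℤ,
      ((c : ℚ) ^ 3 / 24 + d ^ 2 / (2 * c)
          - (f : ℚ) / 2 * ((c : ℚ) - f - 1 + (f : ℚ) / c))
        + 2 * d + 11 * (c : ℚ) / 6 = (n : ℚ) := by
  obtain ⟨t, ht⟩ := hmod.dvd
  obtain ⟨a, ha⟩ := Int.six_dvd_cube_sub_self c
  obtain ⟨b, hb⟩ := (Int.even_mul_mul_add c t).two_dvd
  obtain ⟨e, he⟩ := (Int.even_mul_succ_self f).two_dvd
  refine ⟨a + 2 * c + b + e + f * t + 2 * m - c ^ 2, ?_⟩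
  have hm' : (m : ℚ) = -f - c * t := by exact_mod_cast (by linarith : m = -f - c * t)
  rw [max_ch3_add_euler_eq (t := t) (by positivity) (by linarith), ← hm']
  have ha' : (c : ℚ) ^ 3 - c = 6 * a := by exact_mod_cast ha
  have hb' : (c : ℚ) * t * (c + t) = 2 * b := by exact_mod_cast hb
  have he' : (f : ℚ) * (f + 1) = 2 * e := by exact_mod_cast he
  push_cast
  linear_combination ha' / 6 + hb' / 2 + he' / 2

theorem stmt_6 (c f : ℤ) (hc : 0 < c) (hf0 : 0 ≤ f) (hfc : f < c)
    (d : ℚ) (h2d : ∃ k : ℤ, 2 * d = (k : ℚ))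
    (m : ℤ) (hm : d + (c : ℚ) ^ 2 / 2 = (m : ℚ)) (hmod : m ≡ -f [ZMOD c]) :
    ∃ n : ℤ,
      ((c : ℚ) ^ 3 / 24 + d ^ 2 / (2 * c)
          - (f : ℚ) / 2 * ((c : ℚ) - f - 1 + (f : ℚ) / c))
        + 2 * d + 11 * (c : ℚ) / 6 = (n : ℚ) :=
  stmt_6_general c f hc d m hm hmod
end

section
/- Let d ≤ −1 be a real number and let e ≥ ½d² − (3/2)d + 2/3. Then (24d³ − 12d² + 108de + 81e² − 48e)/(6d − 4)² + 3d/8 − 1/4 ≥ d²(81d² − 120d + 45)/(12d − 8)² > 0. -/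
/-!
On the half-line `e ≥ e₀ := ½d² − (3/2)d + 2/3` the numerator of `ρ_Q²` is a convex quadratic in `e`
whose vertex lies to the left of `e₀`, so the left-hand side is smallest at `e = e₀`, where it equals
the right-hand side. Positivity holds because `81d² − 120d + 45` has negative discriminant.
-/

theorem quadratic_le_quadratic {R : Type*} [CommRing R] [LinearOrder R] [IsStrictOrderedRing R]
    {a b c x y : R} (ha : 0 ≤ a) (hvertex : -b ≤ 2 * a * x) (hxy : x ≤ y) :
    a * x ^ 2 + b * x + c ≤ a * y ^ 2 + b * y + c := by
  have hslope : 0 ≤ a * (x + y) + b := by nlinarith [mul_nonneg ha (sub_nonneg.2 hxy)]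
  nlinarith [mul_nonneg (sub_nonneg.2 hxy) hslope]

/-- `ρ_Q²` for `ch(E) = (3, −2, d, e)`; the theorem's left-hand side is `ρ_Q² − Δ(E)/16`
with `Δ(E) = 4 − 6d`. -/
noncomputable def radiusSq (d e : ℝ) : ℝ :=
  (24 * d ^ 3 - 12 * d ^ 2 + 108 * d * e + 81 * e ^ 2 - 48 * e) / (6 * d - 4) ^ 2

theorem radiusSq_le_radiusSq {d e₀ e : ℝ} (he₀ : 1/2 * d ^ 2 - 3/2 * d + 2/3 ≤ e₀)
    (he : e₀ ≤ e) : radiusSq d e₀ ≤ radiusSq d e := by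
  have hvertex : -(108 * d - 48) ≤ 2 * 81 * e₀ := by nlinarith [sq_nonneg (9 * d - 15/2)]
  have hnum := quadratic_le_quadratic (c := 24 * d ^ 3 - 12 * d ^ 2) (by norm_num) hvertex he
  unfold radiusSq
  apply div_le_div_of_nonneg_right _ (sq_nonneg _)
  linear_combination hnum

theorem radiusSq_at_bound {d : ℝ} (hd : 6 * d - 4 ≠ 0) :
    radiusSq d (1/2 * d ^ 2 - 3/2 * d + 2/3) + 3 * d / 8 - 1/4
      = d ^ 2 * (81 * d ^ 2 - 120 * d + 45) / (12 * d - 8) ^ 2 := by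
  rw [radiusSq, show 12 * d - 8 = 2 * (6 * d - 4) by ring, div_add' _ _ _ (by positivity),
    div_sub' (by positivity), div_eq_div_iff (by positivity) (by positivity)]
  ring

theorem bound_value_pos {d : ℝ} (hd : d ≠ 0) (hd' : 12 * d - 8 ≠ 0) :
    0 < d ^ 2 * (81 * d ^ 2 - 120 * d + 45) / (12 * d - 8) ^ 2 := by
  have hquad : 0 < 81 * d ^ 2 - 120 * d + 45 := by nlinarith [sq_nonneg (9 * d - 20/3)]
  positivity

theorem stmt_14 (d e : ℝ) (hd : d ≤ -1) (he : e ≥ 1/2 * d ^ 2 - 3/2 * d + 2/3) :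
    (24 * d ^ 3 - 12 * d ^ 2 + 108 * d * e + 81 * e ^ 2 - 48 * e) / (6 * d - 4) ^ 2
        + 3 * d / 8 - 1/4
      ≥ d ^ 2 * (81 * d ^ 2 - 120 * d + 45) / (12 * d - 8) ^ 2 ∧
    d ^ 2 * (81 * d ^ 2 - 120 * d + 45) / (12 * d - 8) ^ 2 > 0 := by
  refine ⟨?_, bound_value_pos (by linarith : d < 0).ne (by linarith : 12 * d - 8 < 0).ne⟩
  calc d ^ 2 * (81 * d ^ 2 - 120 * d + 45) / (12 * d - 8) ^ 2
      = radiusSq d (1/2 * d ^ 2 - 3/2 * d + 2/3) + 3 * d / 8 - 1/4 :=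
        (radiusSq_at_bound (by linarith : 6 * d - 4 < 0).ne).symm
    _ ≤ radiusSq d e + 3 * d / 8 - 1/4 := by
        gcongr
        exact radiusSq_le_radiusSq le_rfl he
end
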